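/- The function A(x_1,...,x_m) = x_1(1-x_1) + Σ_{i=2}^m (x_i - x_{i-1})(1-x_i) attains its maximum over the simplex {0 ≤ x_1 ≤ ... ≤ x_m ≤ 1} uniquely at x_i = i/(m+1), and the maximum value is m/(2(m+1)). -/

import Mathlib

/-!
Completing the square. With `c = 1/(m+1)` and increments `dᵢ = xᵢ - xᵢ₋₁`, each summand satisfies
`dᵢ(1 - xᵢ) = φ(xᵢ) - φ(xᵢ₋₁) + c²/2 - (dᵢ - c)²/2` for `φ(t) = t - t²/2 - ct`, so the sum telescopes
to `m/(2(m+1)) - (∑ (dᵢ - c)² + (1 - c - xₘ)²)/2`. Hence the bound, with equality exactly when every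
increment equals `c` (which forces `xₘ = 1 - c`).
-/

open Finset

lemma sum_Icc_sub_mul_one_sub_add_sq (x : ℕ → ℝ) (c : ℝ) (n : ℕ) :
    ∑ i ∈ Icc 1 n, ((x i - x (i - 1)) * (1 - x i) + (x i - x (i - 1) - c) ^ 2 / 2) =
      (x n - x n ^ 2 / 2 - c * x n) - (x 0 - x 0 ^ 2 / 2 - c * x 0) + n * c ^ 2 / 2 := by
  induction n with
  | zero => simp
  | succ n ih =>
    rw [sum_Icc_succ_top (by omega), ih, Nat.add_sub_cancel]
    push_cast
    ring

lemma sum_Icc_sub_mul_one_sub_eq (m : ℕ) (x : ℕ → ℝ) (h0 : x 0 = 0) :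
    ∑ i ∈ Icc 1 m, (x i - x (i - 1)) * (1 - x i) =
      m / (2 * (m + 1)) - (∑ i ∈ Icc 1 m, (x i - x (i - 1) - 1 / (m + 1)) ^ 2
        + (1 - 1 / (m + 1) - x m) ^ 2) / 2 := by
  have htelescope := sum_Icc_sub_mul_one_sub_add_sq x (1 / (m + 1)) m
  rw [sum_add_distrib, ← sum_div, h0] at htelescope
  have hlast : x m - x m ^ 2 / 2 - 1 / (m + 1) * x m + m * (1 / (m + 1)) ^ 2 / 2 =
      m / (2 * (m + 1)) - (1 - 1 / (m + 1) - x m) ^ 2 / 2 := by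
    field_simp
    ring
  linear_combination htelescope + hlast

lemma sub_pred_eq_iff_eq_add_mul (x : ℕ → ℝ) (c : ℝ) (n : ℕ) :
    (∀ i ∈ Icc 1 n, x i - x (i - 1) = c) ↔ ∀ i ≤ n, x i = x 0 + i * c := by
  constructor
  · intro h i hi
    induction i with
    | zero => simp
    | succ i ih =>
      have := h (i + 1) (mem_Icc.2 ⟨by omega, hi⟩)
      rw [Nat.add_sub_cancel] at this
      push_cast
      linear_combination this + ih (by omega)
  · intro h i hi
    obtain ⟨hi1, hin⟩ := mem_Icc.1 hi
    obtain ⟨j, rfl⟩ := Nat.exists_eq_add_of_le' hi1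
    rw [Nat.add_sub_cancel, h _ hin, h j (by omega)]
    push_cast
    ring

theorem stmt1 (m : ℕ) (x : ℕ → ℝ)
    (h0 : x 0 = 0) :
    (∑ i ∈ Finset.Icc 1 m, (x i - x (i - 1)) * (1 - x i)) ≤ m / (2 * (m + 1)) ∧
    ((∑ i ∈ Finset.Icc 1 m, (x i - x (i - 1)) * (1 - x i)) = m / (2 * (m + 1)) ↔
      ∀ i, 1 ≤ i → i ≤ m → x i = i / (m + 1)) := by
  set c : ℝ := 1 / (m + 1)
  set S := ∑ i ∈ Icc 1 m, (x i - x (i - 1) - c) ^ 2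
  set T := (1 - c - x m) ^ 2
  have hS : 0 ≤ S := sum_nonneg fun i _ ↦ sq_nonneg _
  have hT : 0 ≤ T := sq_nonneg _
  have hS0 : S = 0 ↔ ∀ i ≤ m, x i = i * c := by
    simp only [S, sum_eq_zero_iff_of_nonneg (fun i _ ↦ sq_nonneg _), sq_eq_zero_iff, sub_eq_zero,
      sub_pred_eq_iff_eq_add_mul, h0, zero_add]
  have hT0 : S = 0 → T = 0 := by
    intro h
    simp only [T, hS0.1 h m le_rfl, c]
    field_simp
    ring
  rw [sum_Icc_sub_mul_one_sub_eq m x h0]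
  refine ⟨by linarith, ?_⟩
  simp only [sub_eq_self, div_eq_zero_iff, two_ne_zero, or_false]
  rw [add_eq_zero_iff_of_nonneg hS hT, and_iff_left_of_imp hT0, hS0]
  simp only [c, mul_one_div]
  refine ⟨fun h i _ hi ↦ h i hi, fun h i hi ↦ ?_⟩
  rcases i.eq_zero_or_pos with rfl | hi1
  · simp [h0]
  · exact h i hi1 hi
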